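/- For all x, y ∈ 𝓑, x ≈ y if and only if f(x) ≡ f(y), where f : 𝓑 → B_∞ is given by f(b, m) = f_m(b). -/

import Mathlib

/-!
Generators are 0-indexed: the generator of index `i` represents `σ_{i+1}`
of the braid group presentation.
-/

/-- Relators of the infinite braid group `B_∞`: generator `i : ℕ` represents `σ_{i+1}`. -/
def braidRelsInf : Set (FreeGroup ℕ) :=
  {r | (∃ i j : ℕ, i + 2 ≤ j ∧
          r = FreeGroup.of i * FreeGroup.of j * (FreeGroup.of i)⁻¹ * (FreeGroup.of j)⁻¹) ∨
       (∃ i : ℕ,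
          r = FreeGroup.of i * FreeGroup.of (i + 1) * FreeGroup.of i *
              (FreeGroup.of (i + 1))⁻¹ * (FreeGroup.of i)⁻¹ * (FreeGroup.of (i + 1))⁻¹)}

/-- The infinite braid group `B_∞`. -/
def BInf : Type := PresentedGroup braidRelsInf

instance : Group BInf := by unfold BInf; infer_instance

/-- `iσ i` is the generator `σ_{i+1}` of `B_∞` (0-indexed, so `iσ 0 = σ_1`). -/
def iσ (i : ℕ) : BInf := PresentedGroup.of i

/-- Relators of a braid group on generators indexed by `Fin m`;
the generator of index `i` represents `σ_{i+1}` (0-indexed). -/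
def braidRels (m : ℕ) : Set (FreeGroup (Fin m)) :=
  {r | (∃ i j : Fin m, (i : ℕ) + 2 ≤ (j : ℕ) ∧
          r = FreeGroup.of i * FreeGroup.of j * (FreeGroup.of i)⁻¹ * (FreeGroup.of j)⁻¹) ∨
       (∃ i j : Fin m, (j : ℕ) = (i : ℕ) + 1 ∧
          r = FreeGroup.of i * FreeGroup.of j * FreeGroup.of i *
              (FreeGroup.of j)⁻¹ * (FreeGroup.of i)⁻¹ * (FreeGroup.of j)⁻¹)}

/-- The braid group `B_n`, presented with generators `σ_1, …, σ_{n-1}`. -/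
def BraidGroup (n : ℕ) : Type := PresentedGroup (braidRels (n - 1))

instance (n : ℕ) : Group (BraidGroup n) := by unfold BraidGroup; infer_instance

/-- `bσ k` is the generator `σ_{k+1}` of `B_n` (0-indexed, so `bσ 0 = σ_1`). -/
def bσ {n : ℕ} (k : Fin (n - 1)) : BraidGroup n := PresentedGroup.of k

/-- The generating moves of the relation `≡` on `B_∞` (for the shift `T`):
`a·b·a⁻¹ ≡ b`, `b ≡ σ_1·T b`, and `b ≡ σ_1⁻¹·T b`. -/
def equivMove (T : BInf →* BInf) : BInf → BInf → Prop := fun x y =>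
  (∃ a : BInf, x = a * y * a⁻¹) ∨ y = iσ 0 * T x ∨ y = (iσ 0)⁻¹ * T x

/-- The set `𝓑` of pairs `(b, m)` with `m ≥ 2` and `b ∈ B_m`, encoded as
`⟨k, b⟩` with `b ∈ B_{k+2}`. -/
def BB : Type := (k : ℕ) × BraidGroup (k + 2)

/-- The generating moves of the relation `≈` on `𝓑` (for a compatible family
`ι` of inclusions `B_{k+2} → B_{l+2}`, `σ_j ↦ σ_j`): conjugation, the Markov
right-stabilizations `(b, m) ≈ (σ_m^{±1} · i_m b, m+1)`, and the inclusion
moves `(b, m₁) ≈ (i_{m₁} b, m₂)` for `m₁ ≤ m₂`. -/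
def approxMove
    (ι : ∀ (k l : ℕ), k ≤ l → (BraidGroup (k + 2) →* BraidGroup (l + 2))) :
    BB → BB → Prop := fun x y =>
  (∃ a : BraidGroup (x.1 + 2), y = ⟨x.1, a * x.2 * a⁻¹⟩) ∨
  y = ⟨x.1 + 1, bσ (⟨x.1 + 1, by omega⟩ : Fin (x.1 + 3 - 1)) *
        ι x.1 (x.1 + 1) (Nat.le_succ _) x.2⟩ ∨
  y = ⟨x.1 + 1, (bσ (⟨x.1 + 1, by omega⟩ : Fin (x.1 + 3 - 1)))⁻¹ *
        ι x.1 (x.1 + 1) (Nat.le_succ _) x.2⟩ ∨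
  (∃ h : x.1 ≤ y.1, y.2 = ι x.1 y.1 h x.2)

/-!
The map `(b, m) ↦ f_m b` from `𝓑` to `B_∞` is onto, and two pairs with the same image are
`≈`-equivalent: a relation of `B_∞` involves only finitely many generators, so their images already
agree in some `B_l`. It therefore suffices to match the generating moves of `≈` and `≡`.

Write `δ_p = σ_1 ⋯ σ_p`. On the image of `B_m`, the shift `T` is conjugation by `δ_m`, and
`δ_m δ_{m-1}` conjugates `σ_m` to `σ_1`. Hence
`σ_1^{±1} · T b = (δ_m δ_{m-1}) · σ_m^{±1} · (δ_{m-1}⁻¹ b δ_{m-1}) · (δ_m δ_{m-1})⁻¹`,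
so the move `b ≡ σ_1^{±1} · T b` is a Markov stabilization of a conjugate of `b`, up to conjugation.
-/

namespace Relation.EqvGen

variable {α β : Type*} {r : α → α → Prop} {s : β → β → Prop} {g : α → β}

theorem map (h : ∀ x y, r x y → EqvGen s (g x) (g y)) {x y : α}
    (hxy : EqvGen r x y) : EqvGen s (g x) (g y) := by
  induction hxy with
  | rel x y hr => exact h x y hr
  | refl x => exact .refl _
  | symm x y _ ih => exact .symm _ _ ih
  | trans x y z _ _ ih₁ ih₂ => exact .trans _ _ _ ih₁ ih₂

theorem of_map_of_surjective (hg : Function.Surjective g)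
    (hker : ∀ x y, g x = g y → EqvGen r x y) (h : ∀ x y, s (g x) (g y) → EqvGen r x y)
    {x y : α} (hxy : EqvGen s (g x) (g y)) : EqvGen r x y := by
  suffices ∀ u v, EqvGen s u v → ∀ x y, g x = u → g y = v → EqvGen r x y from
    this _ _ hxy x y rfl rfl
  intro u v huv
  induction huv with
  | rel u v hs => rintro x y rfl rfl; exact h x y hs
  | refl u => rintro x y rfl hy; exact hker x y hy.symm
  | symm u v _ ih => exact fun x y hx hy => .symm _ _ (ih y x hy hx)
  | trans u v w _ _ ih₁ ih₂ =>
    intro x y hx hy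
    obtain ⟨z, rfl⟩ := hg v
    exact .trans _ _ _ (ih₁ x z hx rfl) (ih₂ z y rfl hy)

end Relation.EqvGen

namespace BInf

theorem commute_iσ {i j : ℕ} (h : i + 2 ≤ j) : Commute (iσ i) (iσ j) :=
  commutatorElement_eq_one_iff_commute.1 (PresentedGroup.one_of_mem (Or.inl ⟨i, j, h, rfl⟩))

theorem iσ_braid (i : ℕ) : iσ i * iσ (i + 1) * iσ i = iσ (i + 1) * iσ i * iσ (i + 1) := by
  have hr : iσ i * iσ (i + 1) * iσ i * (iσ (i + 1))⁻¹ * (iσ i)⁻¹ * (iσ (i + 1))⁻¹ = 1 :=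
    PresentedGroup.one_of_mem (Or.inr ⟨i, rfl⟩)
  exact mul_inv_eq_one.1 (by simpa only [mul_inv_rev, mul_assoc] using hr)

theorem semiconjBy_iσ_mul_iσ_succ (i : ℕ) :
    SemiconjBy (iσ i * iσ (i + 1)) (iσ i) (iσ (i + 1)) := by
  simp only [SemiconjBy, ← mul_assoc, iσ_braid]

theorem semiconjBy_iσ_succ_mul_iσ (i : ℕ) :
    SemiconjBy (iσ (i + 1) * iσ i) (iσ (i + 1)) (iσ i) := by
  simp only [SemiconjBy, ← mul_assoc, iσ_braid]

def δ : ℕ → BInf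
  | 0 => 1
  | p + 1 => δ p * iσ p

theorem commute_δ_iσ {p j : ℕ} (h : p < j) : Commute (δ p) (iσ j) := by
  induction p with
  | zero => exact Commute.one_left _
  | succ p ih => exact (ih (by omega)).mul_left (commute_iσ (by omega))

theorem semiconjBy_δ_iσ {p i : ℕ} (h : i + 1 < p) : SemiconjBy (δ p) (iσ i) (iσ (i + 1)) := by
  induction p with
  | zero => omega
  | succ p ih =>
    obtain hp | rfl : i + 1 < p ∨ p = i + 1 := by omega
    · exact (ih hp).mul_left (commute_iσ (by omega)).symm
    · change SemiconjBy (δ i * iσ i * iσ (i + 1)) _ _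
      rw [mul_assoc]
      exact SemiconjBy.mul_left (commute_δ_iσ (by omega)) (semiconjBy_iσ_mul_iσ_succ i)

theorem semiconjBy_δ_mul_δ (p : ℕ) : SemiconjBy (δ (p + 1) * δ p) (iσ p) (iσ 0) := by
  induction p with
  | zero => change SemiconjBy (1 * iσ 0 * 1) _ _; simp [SemiconjBy]
  | succ p ih =>
    have hδ : δ (p + 2) * δ (p + 1) = δ (p + 1) * δ p * (iσ (p + 1) * iσ p) := by
      change δ (p + 1) * iσ (p + 1) * (δ p * iσ p) = _
      rw [mul_assoc (δ (p + 1)), ← mul_assoc (iσ (p + 1)), ← (commute_δ_iσ (by omega)).eq]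
      group
    rw [hδ]
    exact ih.mul_left (semiconjBy_iσ_succ_mul_iσ p)

end BInf

namespace BraidGroup

theorem hom_ext {n : ℕ} {G : Type*} [Group G] {φ ψ : BraidGroup n →* G}
    (h : ∀ j, φ (bσ j) = ψ (bσ j)) : φ = ψ :=
  PresentedGroup.ext h

def mk (n : ℕ) : FreeGroup (Fin (n - 1)) →* BraidGroup n := PresentedGroup.mk _

theorem mk_surjective (n : ℕ) : Function.Surjective (mk n) := PresentedGroup.mk_surjective _

theorem mk_eq_one_iff {n : ℕ} {w : FreeGroup (Fin (n - 1))} :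
    mk n w = 1 ↔ w ∈ Subgroup.normalClosure (braidRels (n - 1)) :=
  PresentedGroup.mk_eq_one_iff

end BraidGroup

def BInf.mk : FreeGroup ℕ →* BInf := PresentedGroup.mk _

theorem BInf.mk_eq_one_iff {w : FreeGroup ℕ} :
    BInf.mk w = 1 ↔ w ∈ Subgroup.normalClosure braidRelsInf :=
  PresentedGroup.mk_eq_one_iff

def FreeGroup.truncate (N : ℕ) : FreeGroup ℕ →* FreeGroup (Fin N) :=
  FreeGroup.lift fun i => if h : i < N then .of ⟨i, h⟩ else 1

theorem FreeGroup.truncate_of {N i : ℕ} (h : i < N) : truncate N (.of i) = .of ⟨i, h⟩ := by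
  rw [truncate, FreeGroup.lift_apply_of, dif_pos h]

theorem FreeGroup.truncate_comp_map_val {n N : ℕ} (h : n ≤ N) :
    (truncate N).comp (FreeGroup.map Fin.val) = FreeGroup.map (Fin.castLE h) :=
  FreeGroup.ext_hom _ _ fun j => by
    rw [MonoidHom.comp_apply, FreeGroup.map.of, FreeGroup.map.of, truncate_of (by omega)]; rfl

theorem FreeGroup.eventually_truncate_mem_normalClosure {g : FreeGroup ℕ}
    (hg : g ∈ Subgroup.normalClosure braidRelsInf) :
    ∀ᶠ N in Filter.atTop, truncate N g ∈ Subgroup.normalClosure (braidRels N) := by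
  refine Subgroup.closure_induction (fun y hy => ?_) (.of_forall fun _ => one_mem _)
    (fun _ _ _ _ h₁ h₂ => (h₁.and h₂).mono fun _ h => by
      rw [_root_.map_mul]; exact mul_mem h.1 h.2)
    (fun _ _ h => h.mono fun _ h => by rw [_root_.map_inv]; exact inv_mem h) hg
  obtain ⟨r, hr, hy⟩ := Group.mem_conjugatesOfSet_iff.1 hy
  obtain ⟨c, rfl⟩ := isConj_iff.1 hy
  have hrel : ∀ᶠ N in Filter.atTop, truncate N r ∈ braidRels N := by
    rcases hr with ⟨i, j, hij, rfl⟩ | ⟨i, rfl⟩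
    · filter_upwards [Filter.eventually_gt_atTop j] with N hN
      simp only [_root_.map_mul, _root_.map_inv, truncate_of (show i < N by omega), truncate_of hN]
      exact Or.inl ⟨_, _, hij, rfl⟩
    · filter_upwards [Filter.eventually_gt_atTop (i + 1)] with N hN
      simp only [_root_.map_mul, _root_.map_inv, truncate_of (show i < N by omega),
        truncate_of hN]
      exact Or.inr ⟨_, _, rfl, rfl⟩
  filter_upwards [hrel] with N hN
  rw [_root_.map_mul, _root_.map_mul, _root_.map_inv]
  exact Subgroup.normalClosure_normal.conj_mem _ (Subgroup.subset_normalClosure hN) _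

namespace Markov

open BInf Relation

variable {T : BInf →* BInf} {ι : ∀ (k l : ℕ), k ≤ l → (BraidGroup (k + 2) →* BraidGroup (l + 2))}
  {f : ∀ k : ℕ, BraidGroup (k + 2) →* BInf}

variable (hT : ∀ i : ℕ, T (iσ i) = iσ (i + 1))
  (hι : ∀ (k l : ℕ) (h : k ≤ l) (j : Fin (k + 1)),
    ι k l h (bσ j) = bσ (Fin.castLE (Nat.succ_le_succ h) j : Fin (l + 2 - 1)))
  (hf : ∀ (k : ℕ) (j : Fin (k + 1)), f k (bσ j) = iσ (j : ℕ))

include hι hf in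
theorem f_comp_ι {k l : ℕ} (h : k ≤ l) : (f l).comp (ι k l h) = f k :=
  BraidGroup.hom_ext fun j => by rw [MonoidHom.comp_apply, hι, hf, hf]; rfl

include hι hf in
theorem f_ι {k l : ℕ} (h : k ≤ l) (b : BraidGroup (k + 2)) : f l (ι k l h b) = f k b :=
  DFunLike.congr_fun (f_comp_ι hι hf h) b

include hι hf in
theorem surjective_f : Function.Surjective fun x : BB => f x.1 x.2 := by
  intro u
  have hmono : Monotone fun k => (f k).range := monotone_nat_of_le_succ fun k => by
    rintro _ ⟨b, rfl⟩
    exact ⟨ι k (k + 1) k.le_succ b, f_ι hι hf _ b⟩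
  have htop : Subgroup.closure (Set.range iσ) = ⊤ := PresentedGroup.closure_range_of _
  have hgen : Subgroup.closure (Set.range iσ) ≤ ⨆ k, (f k).range := by
    rw [Subgroup.closure_le]
    rintro _ ⟨i, rfl⟩
    exact Subgroup.mem_iSup_of_mem i ⟨bσ ⟨i, by omega⟩, hf i ⟨i, by omega⟩⟩
  obtain ⟨k, b, hb⟩ :=
    (Subgroup.mem_iSup_of_directed hmono.directed_le).1 (hgen (htop ▸ Subgroup.mem_top u))
  exact ⟨⟨k, b⟩, hb⟩

include hf in
theorem f_mk {k : ℕ} (w : FreeGroup (Fin (k + 2 - 1))) :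
    f k (BraidGroup.mk (k + 2) w) = BInf.mk (FreeGroup.map Fin.val w) := by
  refine DFunLike.congr_fun (FreeGroup.ext_hom ((f k).comp (BraidGroup.mk (k + 2)))
    (BInf.mk.comp (FreeGroup.map Fin.val)) fun j => ?_) w
  rw [MonoidHom.comp_apply, MonoidHom.comp_apply, FreeGroup.map.of]
  exact hf k j

include hι in
theorem ι_mk {k l : ℕ} (h : k ≤ l) (w : FreeGroup (Fin (k + 2 - 1))) :
    ι k l h (BraidGroup.mk (k + 2) w) =
      BraidGroup.mk (l + 2) (FreeGroup.map (Fin.castLE (by omega)) w) := by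
  refine DFunLike.congr_fun (FreeGroup.ext_hom ((ι k l h).comp (BraidGroup.mk (k + 2)))
    ((BraidGroup.mk (l + 2)).comp (FreeGroup.map (Fin.castLE (by omega)))) fun j => ?_) w
  rw [MonoidHom.comp_apply, MonoidHom.comp_apply, FreeGroup.map.of]
  exact hι k l h j

include hι hf in
theorem exists_ι_eq_one_of_f_eq_one {k : ℕ} {c : BraidGroup (k + 2)} (hc : f k c = 1) :
    ∃ l, ∃ h : k ≤ l, ι k l h c = 1 := by
  obtain ⟨w, rfl⟩ := BraidGroup.mk_surjective _ c
  rw [f_mk hf, BInf.mk_eq_one_iff] at hc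
  obtain ⟨N, hN⟩ := Filter.eventually_atTop.1 (FreeGroup.eventually_truncate_mem_normalClosure hc)
  refine ⟨max N k, le_max_right _ _, ?_⟩
  have hw := hN (max N k + 1) (by omega)
  rw [← MonoidHom.comp_apply, FreeGroup.truncate_comp_map_val (by omega)] at hw
  rw [ι_mk hι, BraidGroup.mk_eq_one_iff]
  exact hw

theorem approx_ι (x : BB) {l : ℕ} (h : x.1 ≤ l) :
    EqvGen (approxMove ι) x ⟨l, ι x.1 l h x.2⟩ :=
  .rel _ _ (Or.inr (Or.inr (Or.inr ⟨h, rfl⟩)))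

theorem approx_conj (k : ℕ) (a b : BraidGroup (k + 2)) :
    EqvGen (approxMove ι) ⟨k, b⟩ ⟨k, a * b * a⁻¹⟩ :=
  .rel _ _ (Or.inl ⟨a, rfl⟩)

theorem approxMove_zpow (e : ℤˣ) (x : BB) :
    approxMove ι x ⟨x.1 + 1, bσ (⟨x.1 + 1, by omega⟩ : Fin (x.1 + 3 - 1)) ^ (e : ℤ) *
      ι x.1 (x.1 + 1) x.1.le_succ x.2⟩ := by
  rcases Int.units_eq_one_or e with rfl | rfl
  · exact Or.inr (Or.inl (by rw [Units.val_one, zpow_one]))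
  · exact Or.inr (Or.inr (Or.inl (by rw [Units.val_neg, Units.val_one, zpow_neg_one])))

include hι hf in
theorem approx_mk_of_f_eq {k : ℕ} {b b' : BraidGroup (k + 2)} (h : f k b = f k b') :
    EqvGen (approxMove ι) ⟨k, b⟩ ⟨k, b'⟩ := by
  obtain ⟨l, hl, hc⟩ := exists_ι_eq_one_of_f_eq_one hι hf (c := b⁻¹ * b')
    (by rw [map_mul, map_inv, h, inv_mul_cancel])
  have hb : ι k l hl b = ι k l hl b' := by rwa [map_mul, map_inv, inv_mul_eq_one] at hc
  exact .trans _ _ _ (approx_ι ⟨k, b⟩ hl) (hb ▸ .symm _ _ (approx_ι ⟨k, b'⟩ hl))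

include hι hf in
theorem approx_of_f_eq {x y : BB} (h : f x.1 x.2 = f y.1 y.2) : EqvGen (approxMove ι) x y :=
  .trans _ _ _ (approx_ι x (le_max_left x.1 y.1))
    (.trans _ _ _ (approx_mk_of_f_eq hι hf (by rw [f_ι hι hf, f_ι hι hf, h]))
      (.symm _ _ (approx_ι y (le_max_right x.1 y.1))))

include hι hf in
theorem approx_of_conj {x y : BB} {a : BInf} (h : f x.1 x.2 = a * f y.1 y.2 * a⁻¹) :
    EqvGen (approxMove ι) x y := by
  obtain ⟨⟨m, c⟩, rfl⟩ := surjective_f hι hf a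
  have hy := le_max_left y.1 m
  have hm := le_max_right y.1 m
  refine .trans _ _ _ (approx_of_f_eq hι hf ?_)
    (.symm _ _ (.trans _ _ _ (approx_ι y hy) (approx_conj _ (ι m _ hm c) _)))
  simp only [map_mul, map_inv, f_ι hι hf, h]

include hT hf in
theorem T_f_eq_conj {k : ℕ} (b : BraidGroup (k + 2)) :
    T (f k b) = δ (k + 2) * f k b * (δ (k + 2))⁻¹ := by
  refine DFunLike.congr_fun (BraidGroup.hom_ext (φ := T.comp (f k))
    (ψ := (MulAut.conj (δ (k + 2))).toMonoidHom.comp (f k)) fun j => ?_) b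
  simp only [MonoidHom.comp_apply, MulEquiv.coe_toMonoidHom, MulAut.conj_apply]
  rw [hf k j, hT, (semiconjBy_δ_iσ (by omega)).eq, mul_inv_cancel_right]

include hf in
theorem δ_mem_range {k p : ℕ} (hp : p ≤ k + 1) : δ p ∈ (f k).range := by
  induction p with
  | zero => exact one_mem _
  | succ p ih => exact mul_mem (ih (by omega)) ⟨bσ ⟨p, by omega⟩, hf k ⟨p, by omega⟩⟩

include hT hf in
theorem zpow_mul_T_eq_conj (e : ℤˣ) {k : ℕ} {u : BInf} (hu : u ∈ (f k).range) :
    iσ 0 ^ (e : ℤ) * T u = (δ (k + 2) * δ (k + 1)) *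
      (iσ (k + 1) ^ (e : ℤ) * ((δ (k + 1))⁻¹ * u * δ (k + 1))) * (δ (k + 2) * δ (k + 1))⁻¹ := by
  obtain ⟨b, rfl⟩ := hu
  have hs := ((semiconjBy_δ_mul_δ (k + 1)).zpow_right (e : ℤ)).eq
  rw [T_f_eq_conj hT hf, eq_mul_inv_of_mul_eq hs.symm]
  group

theorem equivMove_zpow (e : ℤˣ) (u : BInf) : equivMove T u (iσ 0 ^ (e : ℤ) * T u) := by
  rcases Int.units_eq_one_or e with rfl | rfl
  · exact Or.inr (Or.inl (by rw [Units.val_one, zpow_one]))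
  · exact Or.inr (Or.inr (by rw [Units.val_neg, Units.val_one, zpow_neg_one]))

include hT hf in
theorem equiv_zpow_mul (e : ℤˣ) {k : ℕ} {u : BInf} (hu : u ∈ (f k).range) :
    EqvGen (equivMove T) u (iσ (k + 1) ^ (e : ℤ) * u) := by
  have hD := δ_mem_range hf (le_refl (k + 1))
  have hconj := zpow_mul_T_eq_conj hT hf e
    (mul_mem (mul_mem hD hu) (inv_mem hD) : δ (k + 1) * u * (δ (k + 1))⁻¹ ∈ (f k).range)
  rw [show (δ (k + 1))⁻¹ * (δ (k + 1) * u * (δ (k + 1))⁻¹) * δ (k + 1) = u by group] at hconj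
  refine .trans _ _ _ (.symm _ _ (.rel _ _ (Or.inl ⟨δ (k + 1), rfl⟩))) ?_
  refine .trans _ _ _ (.rel _ _ (equivMove_zpow e _)) ?_
  rw [hconj]
  exact .rel _ _ (Or.inl ⟨_, rfl⟩)

include hT hι hf in
theorem approx_of_eq_zpow_mul_T (e : ℤˣ) {x y : BB}
    (h : f y.1 y.2 = iσ 0 ^ (e : ℤ) * T (f x.1 x.2)) : EqvGen (approxMove ι) x y := by
  obtain ⟨k, b⟩ := x
  dsimp only at h
  obtain ⟨d, hd⟩ := δ_mem_range hf (le_refl (k + 1))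
  obtain ⟨c, hc⟩ : δ (k + 2) * δ (k + 1) ∈ (f (k + 1)).range :=
    mul_mem (δ_mem_range hf le_rfl) (δ_mem_range hf (by omega))
  have hb := approx_conj (ι := ι) k d (d⁻¹ * b * d)
  rw [show d * (d⁻¹ * b * d) * d⁻¹ = b by group] at hb
  refine .trans _ _ _ (.symm _ _ hb) (.trans _ _ _ (.rel _ _ (approxMove_zpow e _))
    (.trans _ _ _ (approx_conj _ c _) (approx_of_f_eq hι hf ?_)))
  simp only [map_mul, map_inv, map_zpow, hc, hd, f_ι hι hf]
  rw [h, zpow_mul_T_eq_conj hT hf e ⟨b, rfl⟩, hf (k + 1) ⟨k + 1, by omega⟩]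

include hT hι hf in
theorem equiv_of_approxMove {x y : BB} (h : approxMove ι x y) :
    EqvGen (equivMove T) (f x.1 x.2) (f y.1 y.2) := by
  rcases h with ⟨a, rfl⟩ | rfl | rfl | ⟨_, hy⟩
  · rw [map_mul, map_mul, map_inv]
    exact .symm _ _ (.rel _ _ (Or.inl ⟨_, rfl⟩))
  · simpa [f_ι hι hf, hf] using equiv_zpow_mul hT hf 1 ⟨x.2, rfl⟩
  · simpa [f_ι hι hf, hf] using equiv_zpow_mul hT hf (-1) ⟨x.2, rfl⟩
  · rw [hy, f_ι hι hf]
    exact .refl _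

include hT hι hf in
theorem approx_of_equivMove {x y : BB} (h : equivMove T (f x.1 x.2) (f y.1 y.2)) :
    EqvGen (approxMove ι) x y := by
  rcases h with ⟨a, ha⟩ | hy | hy
  · exact approx_of_conj hι hf ha
  · exact approx_of_eq_zpow_mul_T hT hι hf 1 (by simpa using hy)
  · exact approx_of_eq_zpow_mul_T hT hι hf (-1) (by simpa using hy)

end Markov

/-- For all `x, y ∈ 𝓑`, `x ≈ y` if and only if `f x ≡ f y`, where
`f (b, m) = f_m b` for the natural homomorphisms `f_m : B_m → B_∞`. -/
theorem approx_iff_equiv (T : BInf →* BInf)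
    (hT : ∀ i : ℕ, T (iσ i) = iσ (i + 1))
    (ι : ∀ (k l : ℕ), k ≤ l → (BraidGroup (k + 2) →* BraidGroup (l + 2)))
    (hι : ∀ (k l : ℕ) (h : k ≤ l) (j : Fin (k + 1)),
      ι k l h (bσ j) = bσ (Fin.castLE (by omega) j : Fin (l + 2 - 1)))
    (f : ∀ k : ℕ, BraidGroup (k + 2) →* BInf)
    (hf : ∀ (k : ℕ) (j : Fin (k + 1)), f k (bσ j) = iσ (j : ℕ)) :
    ∀ x y : BB,
      Relation.EqvGen (approxMove ι) x y ↔
        Relation.EqvGen (equivMove T) (f x.1 x.2) (f y.1 y.2) := by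
  intro x y
  constructor
  · exact Relation.EqvGen.map (g := fun z : BB => f z.1 z.2)
      fun _ _ => Markov.equiv_of_approxMove hT hι hf
  · exact Relation.EqvGen.of_map_of_surjective (Markov.surjective_f hι hf)
      (fun _ _ => Markov.approx_of_f_eq hι hf) fun _ _ => Markov.approx_of_equivMove hT hι hf
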